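/- For every d ∈ ℕ, the correlated stochastic quantizers (Q1, Q2) with parameters c, r, ε, d at inputs w, w′ ∈ [c−r, c+r] satisfy m(w, w′) ≤ 2r·α(ε)·|w + w′ − 2c| − (w + w′ − 2c)² + 3r²·α(ε)²/2^{d−5}, where m(w, w′) = E[(Q1 + Q2 − w − w′)²]. -/
import Mathlib


open Real Set Finset

/-- `α(ε) = (e^ε + 1)/(e^ε − 1)`. -/
noncomputable def alphaFn (ε : ℝ) : ℝ := (Real.exp ε + 1) / (Real.exp ε - 1)

/-- `q(u) = 1/2 + (u − c)/(2rα(ε))`, the probability of the `+` level for input `u`. -/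
noncomputable def qOf (c r ε u : ℝ) : ℝ := 1 / 2 + (u - c) / (2 * r * alphaFn ε)

/-- `T1 = ⌊2^d · q1⌋`. -/
noncomputable def T1 (c r ε : ℝ) (d : ℕ) (w : ℝ) : ℤ := ⌊(2 : ℝ) ^ d * qOf c r ε w⌋

/-- `P(U = +1) = 2^d·q1 − ⌊2^d·q1⌋`. -/
noncomputable def pU1 (c r ε : ℝ) (d : ℕ) (w : ℝ) : ℝ :=
  (2 : ℝ) ^ d * qOf c r ε w - ⌊(2 : ℝ) ^ d * qOf c r ε w⌋

/-- `T2 = ⌊2^d · (1 − q2)⌋`. -/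
noncomputable def T2 (c r ε : ℝ) (d : ℕ) (w' : ℝ) : ℤ := ⌊(2 : ℝ) ^ d * (1 - qOf c r ε w')⌋

/-- `P(U' = +1) = 2^d·(1 − q2) − ⌊2^d·(1 − q2)⌋`. -/
noncomputable def pU2 (c r ε : ℝ) (d : ℕ) (w' : ℝ) : ℝ :=
  (2 : ℝ) ^ d * (1 - qOf c r ε w') - ⌊(2 : ℝ) ^ d * (1 - qOf c r ε w')⌋

/-- Value of the first correlated quantizer `Q1` on outcome `(z, u)`:
`c + rα` if `z < T1`, `c − rα` if `z > T1`, and `c + U·rα` if `z = T1`. -/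
noncomputable def Q1val (c r ε : ℝ) (d : ℕ) (w : ℝ) (z : ℕ) (u : Bool) : ℝ :=
  if (z : ℤ) < T1 c r ε d w then c + r * alphaFn ε
  else if T1 c r ε d w < (z : ℤ) then c - r * alphaFn ε
  else c + (if u then 1 else -1) * r * alphaFn ε

/-- Value of the second correlated quantizer `Q2` on outcome `(z, u')`:
`c − rα` if `z < T2`, `c + rα` if `z > T2`, and `c − U'·rα` if `z = T2`. -/
noncomputable def Q2val (c r ε : ℝ) (d : ℕ) (w' : ℝ) (z : ℕ) (u' : Bool) : ℝ :=
  if (z : ℤ) < T2 c r ε d w' then c - r * alphaFn ε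
  else if T2 c r ε d w' < (z : ℤ) then c + r * alphaFn ε
  else c - (if u' then 1 else -1) * r * alphaFn ε

/-- Joint pmf of the outcome `(Z, U, U')`: `Z` uniform on `{0, …, 2^d − 1}` and `Z, U, U'`
mutually independent (`u = true` encodes `U = +1`, `u' = true` encodes `U' = +1`). -/
noncomputable def μjoint (c r ε : ℝ) (d : ℕ) (w w' : ℝ) (z : ℕ) (u u' : Bool) : ℝ :=
  ((2 : ℝ) ^ d)⁻¹ * (if u then pU1 c r ε d w else 1 - pU1 c r ε d w) *
    (if u' then pU2 c r ε d w' else 1 - pU2 c r ε d w')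

/-- `m(w, w') = E[(Q1 + Q2 − w − w')²]` for the correlated stochastic quantizers. -/
noncomputable def mCor (c r ε : ℝ) (d : ℕ) (w w' : ℝ) : ℝ :=
  ∑ z ∈ Finset.range (2 ^ d), ∑ u : Bool, ∑ u' : Bool,
    μjoint c r ε d w w' z u u' *
      (Q1val c r ε d w z u + Q2val c r ε d w' z u' - w - w') ^ 2

lemma quad_identity (R s p1 p2 x1 y1 x2 y2 : ℝ) (hx1 : x1^2 = 1) (hy1 : y1^2 = 1)
    (hx2 : x2^2 = 1) (hy2 : y2^2 = 1) :
    p1*p2*(x1*R + x2*R - s)^2 + p1*(1-p2)*(x1*R + y2*R - s)^2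
      + (1-p1)*p2*(y1*R + x2*R - s)^2 + (1-p1)*(1-p2)*(y1*R + y2*R - s)^2
    = R^2*(2 + 2*(p1*x1+(1-p1)*y1)*(p2*x2+(1-p2)*y2))
      - 2*s*R*((p1*x1+(1-p1)*y1) + (p2*x2+(1-p2)*y2)) + s^2 := by
  linear_combination (R^2*p1)*hx1 + (R^2*(1-p1))*hy1 + (R^2*p2)*hx2 + (R^2*(1-p2))*hy2

lemma sum_ite_lt_real (n t : ℕ) (ht : t ≤ n) (v : ℝ) :
    ∑ z ∈ Finset.range n, (if z < t then v else 0) = t * v := by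
  have h : ∀ z, (if z < t then v else 0) = if z ∈ Finset.range t then v else 0 := by
    intro z; simp [Finset.mem_range]
  simp_rw [h]
  rw [Finset.sum_ite_mem, Finset.inter_eq_right.mpr (Finset.range_subset_range.mpr ht)]
  simp [mul_comm]

lemma sum_ite_eq_real (n t : ℕ) (ht : t < n) (v : ℝ) :
    ∑ z ∈ Finset.range n, (if z = t then v else 0) = v := by
  rw [Finset.sum_ite_eq' (Finset.range n) t (fun _ => v)]
  simp [ht]

set_option maxHeartbeats 3000000 in
/-- for every `d ∈ ℕ` and inputs `w, w' ∈ [c−r, c+r]`,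
`m(w, w') ≤ 2rα(ε)·|w + w' − 2c| − (w + w' − 2c)² + 3r²α(ε)²/2^{d−5}`
(the last term interpreted via the integer power `2^{(d:ℤ)−5}`). -/
theorem stmt10 (c r ε : ℝ) (hr : 0 < r) (hε : 0 < ε) (d : ℕ)
    (w w' : ℝ) (hw : w ∈ Icc (c - r) (c + r)) (hw' : w' ∈ Icc (c - r) (c + r)) :
    mCor c r ε d w w' ≤
      2 * r * alphaFn ε * |w + w' - 2 * c| - (w + w' - 2 * c) ^ 2 +
        3 * r ^ 2 * alphaFn ε ^ 2 / (2 : ℝ) ^ ((d : ℤ) - 5) := by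
  obtain ⟨hwa, hwb⟩ := hw
  obtain ⟨hwa', hwb'⟩ := hw'
  have he : (1:ℝ) < Real.exp ε := by
    calc (1:ℝ) = Real.exp 0 := (Real.exp_zero).symm
    _ < Real.exp ε := Real.exp_lt_exp.mpr hε
  have hA1 : 1 < alphaFn ε := by
    rw [alphaFn, lt_div_iff₀ (by linarith)]; linarith
  set A := alphaFn ε with hAdef
  have hA0 : 0 < A := lt_trans one_pos hA1
  have hR : 0 < r * A := mul_pos hr hA0
  have hN' : (0:ℝ) < (2:ℝ)^d := by positivity
  set q1 := qOf c r ε w with hq1def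
  set q2 := qOf c r ε w' with hq2def
  set p1 := pU1 c r ε d w with hp1def
  set p2 := pU2 c r ε d w' with hp2def
  have hq1pos : 0 < q1 := by
    rw [hq1def, qOf, ← hAdef]
    have : -(1/2 : ℝ) < (w-c)/(2*r*A) := by
      rw [lt_div_iff₀ (by linarith)]; nlinarith
    linarith
  have hq1lt : q1 < 1 := by
    rw [hq1def, qOf, ← hAdef]
    have : (w-c)/(2*r*A) < 1/2 := by
      rw [div_lt_iff₀ (by linarith)]; nlinarith
    linarith
  have hq2pos : 0 < q2 := by
    rw [hq2def, qOf, ← hAdef]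
    have : -(1/2 : ℝ) < (w'-c)/(2*r*A) := by
      rw [lt_div_iff₀ (by linarith)]; nlinarith
    linarith
  have hq2lt : q2 < 1 := by
    rw [hq2def, qOf, ← hAdef]
    have : (w'-c)/(2*r*A) < 1/2 := by
      rw [div_lt_iff₀ (by linarith)]; nlinarith
    linarith
  -- floor facts for T1
  have hT1nonneg : 0 ≤ T1 c r ε d w := by
    rw [T1, ← hq1def]
    exact Int.floor_nonneg.mpr (by positivity)
  have hT1lt : T1 c r ε d w < ((2^d : ℕ) : ℤ) := by
    rw [T1, ← hq1def]
    apply Int.floor_lt.mpr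
    push_cast
    nlinarith
  set t1n : ℕ := (T1 c r ε d w).toNat with ht1ndef
  have hT1 : T1 c r ε d w = (t1n : ℤ) := (Int.toNat_of_nonneg hT1nonneg).symm
  clear_value t1n
  have ht1lt : t1n < 2^d := by
    rw [hT1] at hT1lt; exact_mod_cast hT1lt
  have hp1f : p1 = Int.fract ((2:ℝ)^d * q1) := by
    rw [hp1def, pU1, ← hq1def, Int.fract]
  have hp1pos : 0 ≤ p1 := hp1f ▸ Int.fract_nonneg _
  have hp1le : p1 ≤ 1 := le_of_lt (hp1f ▸ Int.fract_lt_one _)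
  have hkey1 : (t1n:ℝ) + p1 = (2:ℝ)^d * q1 := by
    have ht1r : ((t1n:ℕ):ℝ) = ((T1 c r ε d w : ℤ) : ℝ) := by rw [hT1]; push_cast; ring
    rw [ht1r, hp1def, pU1, ← hq1def, T1, ← hq1def]
    ring
  -- floor facts for T2
  have hT2nonneg : 0 ≤ T2 c r ε d w' := by
    rw [T2, ← hq2def]
    refine Int.floor_nonneg.mpr ?_
    have : (0:ℝ) ≤ 1 - q2 := by linarith
    positivity
  have hT2lt : T2 c r ε d w' < ((2^d : ℕ) : ℤ) := by
    rw [T2, ← hq2def]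
    apply Int.floor_lt.mpr
    push_cast
    nlinarith
  set t2n : ℕ := (T2 c r ε d w').toNat with ht2ndef
  have hT2 : T2 c r ε d w' = (t2n : ℤ) := (Int.toNat_of_nonneg hT2nonneg).symm
  clear_value t2n
  have ht2lt : t2n < 2^d := by
    rw [hT2] at hT2lt; exact_mod_cast hT2lt
  have hp2f : p2 = Int.fract ((2:ℝ)^d * (1 - q2)) := by
    rw [hp2def, pU2, ← hq2def, Int.fract]
  have hp2pos : 0 ≤ p2 := hp2f ▸ Int.fract_nonneg _
  have hp2le : p2 ≤ 1 := le_of_lt (hp2f ▸ Int.fract_lt_one _)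
  have hkey2 : (t2n:ℝ) + p2 = (2:ℝ)^d * (1 - q2) := by
    have ht2r : ((t2n:ℕ):ℝ) = ((T2 c r ε d w' : ℤ) : ℝ) := by rw [hT2]; push_cast; ring
    rw [ht2r, hp2def, pU2, ← hq2def, T2, ← hq2def]
    ring
  -- the sign functions
  set x1 : ℕ → ℝ := fun z => if z < t1n then 1 else if t1n < z then -1 else 1 with hx1def
  set y1 : ℕ → ℝ := fun z => if z < t1n then 1 else if t1n < z then -1 else -1 with hy1def
  set x2 : ℕ → ℝ := fun z => if z < t2n then -1 else if t2n < z then 1 else -1 with hx2def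
  set y2 : ℕ → ℝ := fun z => if z < t2n then -1 else if t2n < z then 1 else 1 with hy2def
  set a : ℕ → ℝ := fun z => p1 * x1 z + (1-p1) * y1 z with hadef
  set b : ℕ → ℝ := fun z => p2 * x2 z + (1-p2) * y2 z with hbdef
  clear_value x1 y1 x2 y2 a b
  have habL : ∀ z : ℕ, -1 ≤ a z ∧ a z ≤ 1 := by
    intro z
    simp only [hadef, hx1def, hy1def]
    split_ifs <;> constructor <;> linarith [hp1pos, hp1le]
  have hbbL : ∀ z : ℕ, -1 ≤ b z ∧ b z ≤ 1 := by
    intro z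
    simp only [hbdef, hx2def, hy2def]
    split_ifs <;> constructor <;> linarith [hp2pos, hp2le]
  have hq12 : q1 + q2 - 1 = (w+w'-2*c)/(2*(r*A)) := by
    rw [hq1def, hq2def, qOf, qOf, ← hAdef]
    field_simp
    ring
  -- window bound
  have hab_pt : ∀ z ∈ Finset.range (2^d), 1 + a z * b z ≤
      (if z ∈ Finset.Icc (min t1n t2n) (max t1n t2n) then (2:ℝ) else 0) := by
    intro z hz
    by_cases hin : z ∈ Finset.Icc (min t1n t2n) (max t1n t2n)
    · rw [if_pos hin]
      nlinarith [(habL z).1, (habL z).2, (hbbL z).1, (hbbL z).2]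
    · rw [if_neg hin]
      rw [Finset.mem_Icc] at hin
      rcases (by omega : z < min t1n t2n ∨ max t1n t2n < z) with h|h
      · have h1 : z < t1n := by omega
        have h2 : z < t2n := by omega
        have ea : a z = 1 := by
          simp only [hadef, hx1def, hy1def, if_pos h1]; ring
        have eb : b z = -1 := by
          simp only [hbdef, hx2def, hy2def, if_pos h2]; ring
        rw [ea, eb]; norm_num
      · have h1 : t1n < z := by omega
        have h2 : t2n < z := by omega
        have ea : a z = -1 := by
          simp only [hadef, hx1def, hy1def, if_neg (by omega : ¬ z < t1n), if_pos h1]; ring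
        have eb : b z = 1 := by
          simp only [hbdef, hx2def, hy2def, if_neg (by omega : ¬ z < t2n), if_pos h2]; ring
        rw [ea, eb]; norm_num
  have hwinsum : ∑ z ∈ Finset.range (2^d),
      (if z ∈ Finset.Icc (min t1n t2n) (max t1n t2n) then (2:ℝ) else 0)
      ≤ 2*(((max t1n t2n : ℕ):ℝ) - ((min t1n t2n : ℕ):ℝ) + 1) := by
    rw [Finset.sum_ite_mem, Finset.sum_const, nsmul_eq_mul]
    have h1 : (Finset.range (2^d) ∩ Finset.Icc (min t1n t2n) (max t1n t2n)).card
        ≤ (Finset.Icc (min t1n t2n) (max t1n t2n)).card :=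
      Finset.card_le_card Finset.inter_subset_right
    rw [Nat.card_Icc] at h1
    have hcard : (((Finset.range (2^d) ∩ Finset.Icc (min t1n t2n) (max t1n t2n)).card : ℕ) : ℝ)
        ≤ ((max t1n t2n : ℕ):ℝ) - ((min t1n t2n : ℕ):ℝ) + 1 := by
      calc (((Finset.range (2^d) ∩ Finset.Icc (min t1n t2n) (max t1n t2n)).card : ℕ) : ℝ)
          ≤ ((max t1n t2n + 1 - min t1n t2n : ℕ) : ℝ) := Nat.cast_le.mpr h1
        _ = ((max t1n t2n : ℕ):ℝ) - ((min t1n t2n : ℕ):ℝ) + 1 := by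
            rw [Nat.cast_sub (by omega : min t1n t2n ≤ max t1n t2n + 1)]
            push_cast
            ring
    linarith [hcard]
  have hSab_bound : (2:ℝ)^d + (∑ z ∈ Finset.range (2^d), a z * b z)
      ≤ 2*(((max t1n t2n : ℕ):ℝ) - ((min t1n t2n : ℕ):ℝ) + 1) := by
    have heq : (2:ℝ)^d + (∑ z ∈ Finset.range (2^d), a z * b z)
        = ∑ z ∈ Finset.range (2^d), (1 + a z * b z) := by
      rw [Finset.sum_add_distrib, Finset.sum_const, Finset.card_range, nsmul_eq_mul]
      push_cast
      ring
    rw [heq]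
    exact le_trans (Finset.sum_le_sum hab_pt) hwinsum
  have hfac : (0:ℝ) ≤ (2:ℝ)^d / (2*(r*A)) := by positivity
  have hdiff : ((max t1n t2n : ℕ):ℝ) - ((min t1n t2n : ℕ):ℝ)
      ≤ (2:ℝ)^d * |w+w'-2*c| / (2*(r*A)) + 1 := by
    have h1 : (t1n:ℝ) - (t2n:ℝ) = (2:ℝ)^d*((w+w'-2*c)/(2*(r*A))) + (p2 - p1) := by
      linear_combination hkey1 - hkey2 + (2:ℝ)^d * hq12
    have habs1 : (2:ℝ)^d*((w+w'-2*c)/(2*(r*A))) ≤ (2:ℝ)^d*|w+w'-2*c|/(2*(r*A)) := by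
      rw [mul_div_assoc]
      gcongr
      exact le_abs_self _
    have habs2 : -((2:ℝ)^d*|w+w'-2*c|/(2*(r*A))) ≤ (2:ℝ)^d*((w+w'-2*c)/(2*(r*A))) := by
      rw [mul_div_assoc, ← mul_neg, ← neg_div]
      gcongr
      exact neg_abs_le _
    have hub : (t1n:ℝ) - (t2n:ℝ) ≤ (2:ℝ)^d * |w+w'-2*c| / (2*(r*A)) + 1 := by
      linarith [habs1, h1, hp1pos, hp2le]
    have hlb : (t2n:ℝ) - (t1n:ℝ) ≤ (2:ℝ)^d * |w+w'-2*c| / (2*(r*A)) + 1 := by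
      linarith [habs2, h1, hp2pos, hp1le]
    rcases le_total t1n t2n with h|h
    · rw [max_eq_right h, min_eq_left h]
      exact hlb
    · rw [max_eq_left h, min_eq_right h]
      exact hub
  have hchain : (2:ℝ)^d + (∑ z ∈ Finset.range (2^d), a z * b z)
      ≤ (2:ℝ)^d * |w+w'-2*c| / (r*A) + 4 := by
    have hexp2 : 2*((2:ℝ)^d*|w+w'-2*c|/(2*(r*A)) + 1 + 1)
        = (2:ℝ)^d*|w+w'-2*c|/(r*A) + 4 := by
      field_simp
      ring
    linarith [hSab_bound, hdiff, hexp2]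
  have hQ1t : ∀ z : ℕ, Q1val c r ε d w z true = c + x1 z * (r*A) := by
    intro z
    simp only [Q1val, hT1, Nat.cast_lt, hx1def, ← hAdef, if_true]
    split_ifs <;> ring
  have hQ1f : ∀ z : ℕ, Q1val c r ε d w z false = c + y1 z * (r*A) := by
    intro z
    simp only [Q1val, hT1, Nat.cast_lt, hy1def, ← hAdef, Bool.false_eq_true, if_false]
    split_ifs <;> ring
  have hQ2t : ∀ z : ℕ, Q2val c r ε d w' z true = c + x2 z * (r*A) := by
    intro z
    simp only [Q2val, hT2, Nat.cast_lt, hx2def, ← hAdef, if_true]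
    split_ifs <;> ring
  have hQ2f : ∀ z : ℕ, Q2val c r ε d w' z false = c + y2 z * (r*A) := by
    intro z
    simp only [Q2val, hT2, Nat.cast_lt, hy2def, ← hAdef, Bool.false_eq_true, if_false]
    split_ifs <;> ring
  have hinner : ∀ z ∈ Finset.range (2^d),
      (∑ u : Bool, ∑ u' : Bool, μjoint c r ε d w w' z u u' *
        (Q1val c r ε d w z u + Q2val c r ε d w' z u' - w - w')^2)
      = ((2:ℝ)^d)⁻¹ * ((r*A)^2*(2 + 2*(a z)*(b z))
          - 2*(w+w'-2*c)*(r*A)*(a z + b z) + (w+w'-2*c)^2) := by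
    intro z hz
    have hx1s : (x1 z)^2 = 1 := by simp only [hx1def]; split_ifs <;> norm_num
    have hy1s : (y1 z)^2 = 1 := by simp only [hy1def]; split_ifs <;> norm_num
    have hx2s : (x2 z)^2 = 1 := by simp only [hx2def]; split_ifs <;> norm_num
    have hy2s : (y2 z)^2 = 1 := by simp only [hy2def]; split_ifs <;> norm_num
    simp only [Fintype.sum_bool]
    rw [hQ1t z, hQ1f z, hQ2t z, hQ2f z]
    simp only [μjoint, ← hp1def, ← hp2def, if_true, Bool.false_eq_true, if_false,
      hadef, hbdef]
    linear_combination ((2:ℝ)^d)⁻¹ * quad_identity (r*A) (w+w'-2*c) p1 p2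
      (x1 z) (y1 z) (x2 z) (y2 z) hx1s hy1s hx2s hy2s
  have hm0 : mCor c r ε d w w' = ∑ z ∈ Finset.range (2^d),
      ((2:ℝ)^d)⁻¹ * ((r*A)^2*(2 + 2*(a z)*(b z))
        - 2*(w+w'-2*c)*(r*A)*(a z + b z) + (w+w'-2*c)^2) := by
    unfold mCor
    exact Finset.sum_congr rfl hinner
  -- the three sums
  have hSa : ∑ z ∈ Finset.range (2^d), a z = 2*(t1n:ℝ) + 2*p1 - (2:ℝ)^d := by
    have hpt : ∀ z : ℕ, a z = (if z < t1n then (2:ℝ) else 0)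
        + (if z = t1n then 2*p1 else 0) + (-1) := by
      intro z
      simp only [hadef, hx1def, hy1def]
      split_ifs <;> (first | ring1 | (exfalso; omega))
    simp_rw [hpt]
    rw [Finset.sum_add_distrib, Finset.sum_add_distrib,
      sum_ite_lt_real _ _ ht1lt.le, sum_ite_eq_real _ _ ht1lt,
      Finset.sum_const, Finset.card_range, nsmul_eq_mul]
    push_cast
    ring
  have hSb : ∑ z ∈ Finset.range (2^d), b z = (2:ℝ)^d - 2*(t2n:ℝ) - 2*p2 := by
    have hpt : ∀ z : ℕ, b z = (if z < t2n then (-2:ℝ) else 0)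
        + (if z = t2n then -(2*p2) else 0) + 1 := by
      intro z
      simp only [hbdef, hx2def, hy2def]
      split_ifs <;> (first | ring1 | (exfalso; omega))
    simp_rw [hpt]
    rw [Finset.sum_add_distrib, Finset.sum_add_distrib,
      sum_ite_lt_real _ _ ht2lt.le, sum_ite_eq_real _ _ ht2lt,
      Finset.sum_const, Finset.card_range, nsmul_eq_mul]
    push_cast
    ring
  have hsum : ∑ z ∈ Finset.range (2^d),
      ((2:ℝ)^d)⁻¹ * ((r*A)^2*(2 + 2*(a z)*(b z))
        - 2*(w+w'-2*c)*(r*A)*(a z + b z) + (w+w'-2*c)^2)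
      = ((2:ℝ)^d)⁻¹ * ( (r*A)^2*(2*(2:ℝ)^d + 2*(∑ z ∈ Finset.range (2^d), a z * b z))
          - 2*(w+w'-2*c)*(r*A)*((∑ z ∈ Finset.range (2^d), a z)
            + (∑ z ∈ Finset.range (2^d), b z)) + (2:ℝ)^d*(w+w'-2*c)^2 ) := by
    rw [← Finset.mul_sum]
    congr 1
    have expand : ∀ z : ℕ, (r*A)^2*(2 + 2*(a z)*(b z))
        - 2*(w+w'-2*c)*(r*A)*(a z + b z) + (w+w'-2*c)^2
        = ((r*A)^2*2 + (w+w'-2*c)^2) + (2*(r*A)^2)*(a z * b z)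
          + (-(2*(w+w'-2*c)*(r*A)))*(a z) + (-(2*(w+w'-2*c)*(r*A)))*(b z) :=
      fun z => by ring
    rw [Finset.sum_congr rfl (fun z _ => expand z)]
    rw [Finset.sum_add_distrib, Finset.sum_add_distrib, Finset.sum_add_distrib,
      ← Finset.mul_sum, ← Finset.mul_sum, ← Finset.mul_sum,
      Finset.sum_const, Finset.card_range, nsmul_eq_mul]
    push_cast
    ring
  have hSaSb : (∑ z ∈ Finset.range (2^d), a z) + (∑ z ∈ Finset.range (2^d), b z)
      = (2:ℝ)^d * (w+w'-2*c) / (r*A) := by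
    rw [hSa, hSb]
    have h0 : 2*((t1n:ℝ)+p1) - 2*((t2n:ℝ)+p2) = 2*(2:ℝ)^d*(q1+q2-1) := by
      rw [hkey1, hkey2]; ring
    rw [hq12] at h0
    have h2 : 2*(2:ℝ)^d*((w+w'-2*c)/(2*(r*A))) = (2:ℝ)^d*(w+w'-2*c)/(r*A) := by
      field_simp
    linarith [h0, h2]
  have hmval : mCor c r ε d w w'
      = ((2:ℝ)^d)⁻¹ * (2*(r*A)^2*((2:ℝ)^d + ∑ z ∈ Finset.range (2^d), a z * b z))
        - (w+w'-2*c)^2 := by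
    rw [hm0, hsum, hSaSb]
    have hNinv : ((2:ℝ)^d)⁻¹ * (2:ℝ)^d = 1 := inv_mul_cancel₀ hN'.ne'
    have hdiv : 2*(w+w'-2*c)*(r*A)*((2:ℝ)^d*(w+w'-2*c)/(r*A))
        = 2*(2:ℝ)^d*(w+w'-2*c)^2 := by
      field_simp
    linear_combination (-(((2:ℝ)^d)⁻¹)) * hdiv + (-(w+w'-2*c)^2) * hNinv
  have hpow : 3 * r^2 * A^2 / (2:ℝ)^((d:ℤ)-5) = 96 * (r*A)^2 / (2:ℝ)^d := by
    rw [zpow_sub₀ (two_ne_zero), zpow_natCast]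
    norm_num
    field_simp
    ring
  rw [hmval, hpow]
  have step1 : ((2:ℝ)^d)⁻¹ * (2*(r*A)^2*((2:ℝ)^d + ∑ z ∈ Finset.range (2^d), a z * b z))
      ≤ ((2:ℝ)^d)⁻¹ * (2*(r*A)^2*((2:ℝ)^d * |w+w'-2*c| / (r*A) + 4)) := by
    apply mul_le_mul_of_nonneg_left _ (by positivity)
    exact mul_le_mul_of_nonneg_left hchain (by positivity)
  have step2 : ((2:ℝ)^d)⁻¹ * (2*(r*A)^2*((2:ℝ)^d * |w+w'-2*c| / (r*A) + 4))
      = 2*(r*A)*|w+w'-2*c| + 8*(r*A)^2/(2:ℝ)^d := by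
    field_simp
    ring
  have step3 : 8*(r*A)^2/(2:ℝ)^d ≤ 96*(r*A)^2/(2:ℝ)^d := by
    have h8 : 8*(r*A)^2 ≤ 96*(r*A)^2 := by linarith [sq_nonneg (r*A)]
    exact (div_le_div_iff_of_pos_right hN').mpr h8
  linarith [step1, step2, step3]
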